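/- For n ≥ 1 and 0 ≤ k ≤ n-1, the second-order Eulerian numbers can be expressed via Stirling numbers of the second kind: T^(2)_{n,k} = Σ_{ℓ=1}^{k+1} (-1)^{k-ℓ+1} · C(2n+1, k-ℓ+1) · S(n+ℓ, ℓ). -/

import Mathlib

/-- The `m`th-order Eulerian numbers `T^(m)_{n,k}`, with integer descent index `k`
(so `T^(m)_{n,k} = 0` for `k < 0` or `k ≥ n`). -/
def eulerianT (m : ℕ) : ℕ → ℤ → ℤ
  | 0, _ => 0
  | 1, k => if k = 0 then 1 else 0
  | n + 2, k =>
      if k < 0 ∨ (n : ℤ) + 2 ≤ k then 0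
      else (k + 1) * eulerianT m (n + 1) k +
        ((m : ℤ) * ((n : ℤ) + 2) - k - (m : ℤ) + 1) * eulerianT m (n + 1) (k - 1)

/-- Stirling numbers of the second kind `S(n,k)`: the number of partitions of an
`n`-set into `k` nonempty blocks. -/
def stirlingSecond : ℕ → ℕ → ℕ
  | 0, 0 => 1
  | 0, _ + 1 => 0
  | _ + 1, 0 => 0
  | n + 1, k + 1 => (k + 1) * stirlingSecond n (k + 1) + stirlingSecond n k

/-! With `G_n = ∑ᵢ S(n+i+1, i+1) Xⁱ`, the recurrence of the Stirling numbers reads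
`(1 - X) G_{n+1} = (X G_n)'`. Hence `F_n = (1 - X)^(2n+1) G_n`, whose `k`-th coefficient is the
alternating sum, satisfies `F_{n+1} = (1 - X) F_n + X (1 - X) F_n' + (2n+1) X F_n`. On coefficients
this is the recurrence `T_{n+1,k} = (k+1) T_{n,k} + (2n+1-k) T_{n,k-1}` of the second-order
Eulerian numbers, and `F_1 = 1`. -/

open PowerSeries

theorem stirlingSecond_eq_nat_stirlingSecond : stirlingSecond = Nat.stirlingSecond := by
  funext n k
  induction n generalizing k with
  | zero => cases k <;> rfl
  | succ n ih => cases k <;> simp [stirlingSecond, Nat.stirlingSecond_succ_succ, ih]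

theorem coeff_one_sub_X_pow {R : Type*} [CommRing R] (m j : ℕ) :
    coeff j ((1 - X : R⟦X⟧) ^ m) = (-1) ^ j * m.choose j := by
  have : (1 - X : R⟦X⟧) = rescale (-1) (1 + X) := by simp [sub_eq_add_neg]
  rw [this, ← map_pow, coeff_rescale, ← Polynomial.coe_X, ← Polynomial.coe_one,
    ← Polynomial.coe_add, ← Polynomial.coe_pow, Polynomial.coeff_coe,
    Polynomial.coeff_one_add_X_pow]

section EulerianStep

variable {R : Type*} [CommRing R]

noncomputable def eulerianStep (c : R) (F : R⟦X⟧) : R⟦X⟧ :=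
  (1 - X) * F + X * (1 - X) * d⁄dX R F + C c * X * F

theorem eulerianStep_eq_add_X_mul (c : R) (F : R⟦X⟧) :
    eulerianStep c F = F + X * (C c * F - F + d⁄dX R F - X * d⁄dX R F) := by
  rw [eulerianStep]; ring

theorem coeff_zero_eulerianStep (c : R) (F : R⟦X⟧) :
    coeff 0 (eulerianStep c F) = coeff 0 F := by
  simp [eulerianStep_eq_add_X_mul]

theorem coeff_succ_eulerianStep (c : R) (F : R⟦X⟧) (k : ℕ) :
    coeff (k + 1) (eulerianStep c F) = (k + 2) * coeff (k + 1) F + (c - k - 1) * coeff k F := by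
  simp only [eulerianStep_eq_add_X_mul, map_add, map_sub, coeff_succ_X_mul, coeff_C_mul,
    coeff_derivative]
  cases k with
  | zero => simp only [zero_add, coeff_zero_X_mul]; ring
  | succ k => rw [coeff_succ_X_mul, coeff_derivative]; push_cast; ring

end EulerianStep

theorem eulerianT_eq_zero_of_neg (m n : ℕ) {k : ℤ} (hk : k < 0) : eulerianT m n k = 0 := by
  match n with
  | 0 => rfl
  | 1 => simp [eulerianT, hk.ne]
  | n + 2 => rw [eulerianT, if_pos (Or.inl hk)]

theorem eulerianT_eq_zero_of_le (m n : ℕ) {k : ℤ} (hk : n ≤ k) : eulerianT m n k = 0 := by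
  match n with
  | 0 => rfl
  | 1 => rw [eulerianT, if_neg (by omega)]
  | n + 2 => rw [eulerianT, if_pos (Or.inr (by exact_mod_cast hk))]

theorem eulerianT_succ (m n : ℕ) (hn : n ≠ 0) (k : ℤ) :
    eulerianT m (n + 1) k =
      (k + 1) * eulerianT m n k + ((m * n + 1 : ℤ) - k) * eulerianT m n (k - 1) := by
  obtain ⟨n, rfl⟩ := Nat.exists_eq_succ_of_ne_zero hn
  rw [eulerianT]
  split_ifs with h
  · rcases h with h | h
    · rw [eulerianT_eq_zero_of_neg _ _ h, eulerianT_eq_zero_of_neg _ _ (by omega : k - 1 < 0)]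
      ring
    · rw [eulerianT_eq_zero_of_le _ _ (by push_cast; omega),
        eulerianT_eq_zero_of_le _ _ (by push_cast; omega : ((n + 1 : ℕ) : ℤ) ≤ k - 1)]
      ring
  · push_cast; ring

noncomputable def eulerianSeries (m n : ℕ) : ℤ⟦X⟧ :=
  mk fun k => eulerianT m n k

theorem eulerianSeries_one (m : ℕ) : eulerianSeries m 1 = 1 := by
  ext k
  simp [eulerianSeries, eulerianT, coeff_one]

theorem eulerianSeries_succ (m n : ℕ) (hn : n ≠ 0) :
    eulerianSeries m (n + 1) = eulerianStep (m * n + 1 : ℤ) (eulerianSeries m n) := by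
  ext k
  cases k with
  | zero =>
    simp [coeff_zero_eulerianStep, eulerianSeries, eulerianT_succ m n hn,
      eulerianT_eq_zero_of_neg m n (by norm_num : (-1 : ℤ) < 0)]
  | succ k =>
    simp only [coeff_succ_eulerianStep, eulerianSeries, coeff_mk, eulerianT_succ m n hn]
    push_cast
    rw [add_sub_cancel_right]
    ring

noncomputable def stirlingSecondSeries (n : ℕ) : ℤ⟦X⟧ :=
  mk fun i => (stirlingSecond (n + i + 1) (i + 1) : ℤ)

theorem one_sub_X_mul_stirlingSecondSeries_zero : (1 - X) * stirlingSecondSeries 0 = 1 := by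
  have : stirlingSecondSeries 0 = mk 1 := by
    ext i
    simp [stirlingSecondSeries, stirlingSecond_eq_nat_stirlingSecond, Nat.stirlingSecond_self]
  rw [this, mul_comm, mk_one_mul_one_sub_eq_one]

theorem one_sub_X_mul_stirlingSecondSeries_succ (n : ℕ) :
    (1 - X) * stirlingSecondSeries (n + 1) = d⁄dX ℤ (X * stirlingSecondSeries n) := by
  ext i
  cases i with
  | zero =>
    simp [stirlingSecondSeries, sub_mul, stirlingSecond_eq_nat_stirlingSecond,
      Nat.stirlingSecond_one_right]
  | succ i =>
    simp only [stirlingSecondSeries, stirlingSecond_eq_nat_stirlingSecond, sub_mul, one_mul,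
      map_sub, coeff_mk, coeff_succ_X_mul, Derivation.leibniz, smul_eq_mul, derivative_X, mul_one,
      map_add, coeff_derivative]
    rw [show n + 1 + (i + 1) + 1 = n + (i + 1) + 1 + 1 by omega, Nat.stirlingSecond_succ_succ,
      show n + 1 + i + 1 = n + (i + 1) + 1 by omega]
    push_cast; ring

noncomputable def stirlingEulerSeries (n : ℕ) : ℤ⟦X⟧ :=
  (1 - X) ^ (2 * n + 1) * stirlingSecondSeries n

theorem stirlingEulerSeries_succ (n : ℕ) :
    stirlingEulerSeries (n + 1) = eulerianStep (2 * n + 1 : ℤ) (stirlingEulerSeries n) := by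
  have hG := one_sub_X_mul_stirlingSecondSeries_succ n
  simp only [Derivation.leibniz, derivative_X, smul_eq_mul] at hG
  simp only [stirlingEulerSeries, eulerianStep, Derivation.leibniz, Derivation.leibniz_pow,
    smul_eq_mul, map_sub, derivative_one, derivative_X]
  rw [show 2 * (n + 1) + 1 = 2 * n + 1 + 1 + 1 by ring, show 2 * n + 1 - 1 = 2 * n by omega]
  simp only [nsmul_eq_mul, map_add, map_mul, map_natCast, map_ofNat, map_one]
  push_cast
  linear_combination (1 - X) ^ (2 * n + 2) * hG

theorem stirlingEulerSeries_one : stirlingEulerSeries 1 = 1 := by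
  have h0 : stirlingEulerSeries 0 = 1 := by
    simpa [stirlingEulerSeries] using one_sub_X_mul_stirlingSecondSeries_zero
  rw [stirlingEulerSeries_succ, h0, eulerianStep]
  simp

theorem eulerianSeries_two_eq_stirlingEulerSeries (n : ℕ) (hn : 1 ≤ n) :
    eulerianSeries 2 n = stirlingEulerSeries n := by
  induction n, hn using Nat.le_induction with
  | base => rw [eulerianSeries_one, stirlingEulerSeries_one]
  | succ n hn ih =>
    rw [eulerianSeries_succ 2 n (by omega), stirlingEulerSeries_succ, ih]
    rfl

theorem coeff_stirlingEulerSeries (n k : ℕ) :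
    coeff k (stirlingEulerSeries n) =
      ∑ ℓ ∈ Finset.Icc 1 (k + 1),
        (-1 : ℤ) ^ (k + 1 - ℓ) * ((2 * n + 1).choose (k + 1 - ℓ) : ℤ) *
          (stirlingSecond (n + ℓ) ℓ : ℤ) := by
  rw [stirlingEulerSeries, mul_comm, coeff_mul, Finset.Nat.sum_antidiagonal_eq_sum_range_succ
    (fun i j => coeff i (stirlingSecondSeries n) * coeff j ((1 - X : ℤ⟦X⟧) ^ (2 * n + 1))),
    ← Finset.Ico_add_one_right_eq_Icc, Finset.sum_Ico_eq_sum_range, Nat.add_sub_cancel]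
  refine Finset.sum_congr rfl fun i _ => ?_
  rw [coeff_one_sub_X_pow, stirlingSecondSeries, coeff_mk, show k + 1 - (1 + i) = k - i by omega,
    show n + (1 + i) = n + i + 1 by omega, add_comm 1 i]
  ring

theorem eulerianT2_eq_sum_stirlingSecond_general (n k : ℕ) (hn : 1 ≤ n) :
    eulerianT 2 n (k : ℤ) =
      ∑ ℓ ∈ Finset.Icc 1 (k + 1),
        (-1 : ℤ) ^ (k + 1 - ℓ) * ((2 * n + 1).choose (k + 1 - ℓ) : ℤ) *
          (stirlingSecond (n + ℓ) ℓ : ℤ) := by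
  rw [← coeff_stirlingEulerSeries, ← eulerianSeries_two_eq_stirlingEulerSeries n hn,
    eulerianSeries, coeff_mk]

theorem eulerianT2_eq_sum_stirlingSecond (n k : ℕ) (hn : 1 ≤ n) (hk : k ≤ n - 1) :
    eulerianT 2 n (k : ℤ) =
      ∑ ℓ ∈ Finset.Icc 1 (k + 1),
        (-1 : ℤ) ^ (k + 1 - ℓ) * ((2 * n + 1).choose (k + 1 - ℓ) : ℤ) *
          (stirlingSecond (n + ℓ) ℓ : ℤ) :=
  eulerianT2_eq_sum_stirlingSecond_general n k hn
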